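/- Suppose there exists a t-(v,k,λ)-design with λ ≥ 1, and let t0, t1, t2 be positive integers with t0 = t1 + t2 ≤ t. Then there exists a (K,F,Q,S) placement delivery array with K = C(v,t0)·λ_{t0}, F = C(v,t1)·λ_{t1}, Q = C(v,t1)·λ_{t1} − C(t0, t1), and S = C(v,t2)·λ_{t2}, where λ_s = λ·C(v−s, t−s)/C(k−s, t−s) for 0 ≤ s ≤ t. -/

import Mathlib

open Finset

/-- A `(K, F, Q, S)` placement delivery array: an `F × K` array with entries in
`[S] ∪ {*}` (where `none` plays the role of `*`) satisfying conditions C1, C2, C3. -/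
def IsPDA {K F S : ℕ} (Q : ℕ) (P : Fin F → Fin K → Option (Fin S)) : Prop :=
  -- C1: the symbol `*` appears exactly `Q` times in each column
  (∀ k : Fin K, (univ.filter fun j : Fin F => P j k = none).card = Q) ∧
  -- C2: each integer `s ∈ [S]` occurs at least once in the array
  (∀ s : Fin S, ∃ j k, P j k = some s) ∧
  -- C3
  (∀ (j₁ j₂ : Fin F) (k₁ k₂ : Fin K) (s : Fin S), (j₁, k₁) ≠ (j₂, k₂) →
    P j₁ k₁ = some s → P j₂ k₂ = some s →
    j₁ ≠ j₂ ∧ k₁ ≠ k₂ ∧ P j₁ k₂ = none ∧ P j₂ k₁ = none)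

/-- There exists a `(K, F, Q, S)` placement delivery array. -/
def ExistsPDA (K F Q S : ℕ) : Prop :=
  ∃ P : Fin F → Fin K → Option (Fin S), IsPDA Q P

/-- A `t`-`(v,k,λ)` design: `V` is a `v`-set, `B` a collection (multiset) of
`k`-subsets of `V`, such that every `t`-subset of `V` lies in exactly `λ` blocks. -/
def IsTDesign {V : Type} [Fintype V] [DecidableEq V] (B : Multiset (Finset V))
    (t v k lam : ℕ) : Prop :=
  Fintype.card V = v ∧ (∀ blk ∈ B, blk.card = k) ∧
  (∀ T : Finset V, T.card = t → (B.filter fun blk => T ⊆ blk).card = lam)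

/-- `λ_s = λ · C(v-s, t-s) / C(k-s, t-s)`, the number of blocks of a
`t`-`(v,k,λ)` design containing a fixed `s`-subset (`0 ≤ s ≤ t`). -/
def designLambda (lam v k t s : ℕ) : ℕ :=
  lam * Nat.choose (v - s) (t - s) / Nat.choose (k - s) (t - s)

private lemma msum_ite {α : Type*} (p : α → Prop) [DecidablePred p] (c : ℕ) (B : Multiset α) :
    (B.map fun b => if p b then c else 0).sum = c * B.countP p := by
  induction B using Multiset.induction_on with
  | empty => simp
  | cons a s ih =>
    by_cases h : p a <;> simp [h, ih, Multiset.countP_cons, Nat.mul_add, Nat.add_comm]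

private lemma msum_swap {α β : Type*} (s : Finset β) (g : β → α → ℕ) (B : Multiset α) :
    (B.map fun b => ∑ a ∈ s, g a b).sum = ∑ a ∈ s, (B.map fun b => g a b).sum := by
  induction B using Multiset.induction_on with
  | empty => simp
  | cons a sB ih => simp [ih, Finset.sum_add_distrib]

/-- number of `m`-subsets of `X` containing a fixed `T ⊆ X`. -/
private lemma card_supersets {V : Type} [DecidableEq V] {X T : Finset V} (hTX : T ⊆ X)
    (m : ℕ) (hm : T.card ≤ m) :
    ((X.powersetCard m).filter fun T' => T ⊆ T').card
      = (X.card - T.card).choose (m - T.card) := by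
  rw [← card_sdiff_of_subset hTX, ← Finset.card_powersetCard (m - T.card) (X \ T)]
  apply Finset.card_bij' (fun T' _ => T' \ T) (fun U _ => U ∪ T)
  · intro T' hT'
    simp only [mem_filter, mem_powersetCard] at hT'
    simp only [mem_powersetCard]
    exact ⟨sdiff_subset_sdiff hT'.1.1 le_rfl, by
      rw [card_sdiff_of_subset hT'.2, hT'.1.2]⟩
  · intro U hU
    simp only [mem_powersetCard] at hU
    have hdisj : Disjoint U T := (Finset.subset_sdiff.mp hU.1).2
    simp only [mem_filter, mem_powersetCard]
    refine ⟨⟨union_subset ((Finset.subset_sdiff.mp hU.1).1) hTX, ?_⟩, subset_union_right⟩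
    rw [card_union_of_disjoint hdisj, hU.2]
    omega
  · intro T' hT'
    simp only [mem_filter, mem_powersetCard] at hT'
    exact sdiff_union_of_subset hT'.2
  · intro U hU
    simp only [mem_powersetCard] at hU
    have hdisj : Disjoint U T := (Finset.subset_sdiff.mp hU.1).2
    exact union_sdiff_cancel_right hdisj

/-- Lemma A: number of blocks containing a fixed `s`-set equals `λ_s`. -/
lemma design_count {V : Type} [Fintype V] [DecidableEq V] {B : Multiset (Finset V)}
    {t v k lam : ℕ} (htk : t ≤ k) (hdes : IsTDesign B t v k lam)
    {s : ℕ} (hst : s ≤ t) {T : Finset V} (hT : T.card = s) :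
    Multiset.card (B.filter fun blk => T ⊆ blk) = designLambda lam v k t s := by
  obtain ⟨hV, hblk, hlamt⟩ := hdes
  set A : Finset (Finset V) := (powersetCard t (univ : Finset V)).filter fun T' => T ⊆ T'
    with hA
  have hAcard : A.card = (v - s).choose (t - s) := by
    rw [hA, card_supersets (subset_univ T) t (by omega), card_univ, hV, hT]
  have key : ∀ blk ∈ B,
      ((A.filter fun T' => T' ⊆ blk).card) = if T ⊆ blk then (k - s).choose (t - s) else 0 := by
    intro blk hb
    have hset : A.filter (fun T' => T' ⊆ blk)
        = (powersetCard t blk).filter fun T' => T ⊆ T' := by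
      ext T'
      simp only [hA, mem_filter, mem_powersetCard, subset_univ, true_and]
      tauto
    rw [hset]
    by_cases hTb : T ⊆ blk
    · rw [if_pos hTb, card_supersets hTb t (by omega), hblk blk hb, hT]
    · rw [if_neg hTb, Finset.card_eq_zero, Finset.eq_empty_iff_forall_notMem]
      intro T' hT'
      simp only [mem_filter, mem_powersetCard] at hT'
      exact hTb (hT'.2.trans hT'.1.1)
  have main : Multiset.card (B.filter fun blk => T ⊆ blk) * ((k - s).choose (t - s))
      = lam * (v - s).choose (t - s) := by
    have e1 : (B.map fun blk => (A.filter fun T' => T' ⊆ blk).card).sum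
        = ((k - s).choose (t - s)) * Multiset.countP (fun blk => T ⊆ blk) B := by
      rw [Multiset.map_congr rfl key, msum_ite]
    have e2 : (B.map fun blk => (A.filter fun T' => T' ⊆ blk).card).sum
        = lam * (v - s).choose (t - s) := by
      have : ∀ blk, (A.filter fun T' => T' ⊆ blk).card
          = ∑ T' ∈ A, if T' ⊆ blk then 1 else 0 := fun blk => Finset.card_filter _ _
      simp only [this]
      rw [msum_swap]
      have e3 : ∀ T' ∈ A, (B.map fun blk => if T' ⊆ blk then 1 else 0).sum = lam := by
        intro T' hT'
        rw [msum_ite, one_mul, Multiset.countP_eq_card_filter]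
        apply hlamt
        simp only [hA, mem_filter, mem_powersetCard] at hT'
        exact hT'.1.2
      rw [Finset.sum_congr rfl e3, Finset.sum_const, hAcard, smul_eq_mul, mul_comm]
    rw [e1] at e2
    rw [mul_comm, Multiset.countP_eq_card_filter] at e2
    exact e2
  have hcpos : 0 < (k - s).choose (t - s) := Nat.choose_pos (by omega)
  rw [designLambda, ← main, Nat.mul_div_cancel _ hcpos]

/-- counting indices in a list version -/
lemma filter_get_card {α : Type*} (L : List α) (p : α → Prop) [DecidablePred p] :
    (univ.filter fun j : Fin L.length => p (L.get j)).card
      = Multiset.countP p (↑L : Multiset α) := by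
  induction L with
  | nil => simp
  | cons a l ih =>
    have h2 : ∑ i : Fin l.length, (if p (l.get i) then 1 else 0)
        = Multiset.countP p (↑l : Multiset α) := by
      rw [← Finset.card_filter]; exact ih
    calc (univ.filter fun j : Fin (a :: l).length => p ((a :: l).get j)).card
        = ∑ i : Fin (l.length + 1), (if p ((a :: l).get i) then 1 else 0) :=
          Finset.card_filter _ _
      _ = (if p a then 1 else 0) + ∑ i : Fin l.length, (if p (l.get i) then 1 else 0) :=
          Fin.sum_univ_succ _
      _ = Multiset.countP p (↑(a :: l) : Multiset α) := by
          rw [h2, ← Multiset.cons_coe, Multiset.countP_cons]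
          by_cases h : p a <;> simp [h] <;> omega

/-- index type: pairs (s-subset, block index) with the subset inside the block -/
abbrev DIdx {V : Type} [DecidableEq V] (L : List (Finset V)) (s : ℕ) :=
  {p : Finset V × Fin L.length // p.1.card = s ∧ p.1 ⊆ L.get p.2}

lemma card_dIdx {V : Type} [Fintype V] [DecidableEq V] {B : Multiset (Finset V)}
    {t v k lam : ℕ} (htk : t ≤ k) (hdes : IsTDesign B t v k lam)
    {s : ℕ} (hst : s ≤ t) :
    Fintype.card (DIdx B.toList s) = v.choose s * designLambda lam v k t s := by
  rw [Fintype.card_subtype, Finset.card_filter, Fintype.sum_prod_type]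
  have inner : ∀ T : Finset V,
      (∑ j : Fin B.toList.length, if T.card = s ∧ T ⊆ B.toList.get j then 1 else 0)
        = if T.card = s then designLambda lam v k t s else 0 := by
    intro T
    by_cases hTs : T.card = s
    · simp only [hTs, true_and, if_true]
      have : (∑ j : Fin B.toList.length, if T ⊆ B.toList.get j then 1 else 0)
          = (univ.filter fun j : Fin B.toList.length => T ⊆ B.toList.get j).card :=
        (Finset.card_filter _ _).symm
      rw [this, filter_get_card, Multiset.coe_toList, Multiset.countP_eq_card_filter,
        design_count htk hdes hst hTs]
    · simp [hTs]
  rw [Finset.sum_congr rfl fun T _ => inner T, ← Finset.sum_filter]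
  rw [Finset.sum_const, smul_eq_mul]
  congr 1
  have hfl := Fintype.card_finset_len (α := V) s
  rw [Fintype.card_subtype] at hfl
  rw [hfl, hdes.1]

/-- transport an abstract PDA along cardinalities -/
lemma existsPDA_of {R C Y : Type} [Fintype R] [Fintype C] [Fintype Y]
    [DecidableEq R] [DecidableEq C] [DecidableEq Y]
    {K F Q S : ℕ} (hR : Fintype.card R = F) (hC : Fintype.card C = K)
    (hY : Fintype.card Y = S) (P : R → C → Option Y)
    (h1 : ∀ c, (univ.filter fun r => P r c = none).card = Q)
    (h2 : ∀ y, ∃ r c, P r c = some y)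
    (h3 : ∀ (r₁ r₂ : R) (c₁ c₂ : C) (y : Y), (r₁, c₁) ≠ (r₂, c₂) →
      P r₁ c₁ = some y → P r₂ c₂ = some y →
      r₁ ≠ r₂ ∧ c₁ ≠ c₂ ∧ P r₁ c₂ = none ∧ P r₂ c₁ = none) :
    ExistsPDA K F Q S := by
  classical
  obtain eR := Fintype.equivFinOfCardEq hR
  obtain eC := Fintype.equivFinOfCardEq hC
  obtain eY := Fintype.equivFinOfCardEq hY
  refine ⟨fun j kk => (P (eR.symm j) (eC.symm kk)).map eY, ?_, ?_, ?_⟩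
  · intro kk
    rw [← h1 (eC.symm kk)]
    apply Finset.card_bij' (fun j _ => eR.symm j) (fun r _ => eR r)
    · intro j hj
      simp only [mem_filter, mem_univ, true_and, Option.map_eq_none_iff] at hj ⊢
      exact hj
    · intro r hr
      simp only [mem_filter, mem_univ, true_and, Option.map_eq_none_iff] at hr ⊢
      simpa using hr
    · intro j _; simp
    · intro r _; simp
  · intro y
    obtain ⟨r, c, hrc⟩ := h2 (eY.symm y)
    exact ⟨eR r, eC c, by simp [hrc]⟩
  · intro j₁ j₂ k₁ k₂ y hne hp1 hp2
    rw [Option.map_eq_some_iff] at hp1 hp2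
    obtain ⟨a₁, ha₁, ha₁'⟩ := hp1
    obtain ⟨a₂, ha₂, ha₂'⟩ := hp2
    have hy₁ : a₁ = eY.symm y := by rw [← ha₁']; simp
    have hy₂ : a₂ = eY.symm y := by rw [← ha₂']; simp
    subst hy₁; subst hy₂
    have hne' : (eR.symm j₁, eC.symm k₁) ≠ (eR.symm j₂, eC.symm k₂) := by
      intro h
      apply hne
      rw [Prod.ext_iff] at h ⊢
      exact ⟨eR.symm.injective.eq_iff.mp h.1 ▸ rfl, eC.symm.injective.eq_iff.mp h.2 ▸ rfl⟩
    obtain ⟨hr, hc, hn1, hn2⟩ := h3 _ _ _ _ _ hne' ha₁ ha₂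
    refine ⟨fun h => hr (by rw [h]), fun h => hc (by rw [h]), ?_, ?_⟩
    · simp [Option.map_eq_none_iff, hn1]
    · simp [Option.map_eq_none_iff, hn2]

def pdaEntry {V : Type} [DecidableEq V] (L : List (Finset V)) (t1 t0 t2 : ℕ)
    (h2 : t0 - t1 = t2) (r : DIdx L t1) (c : DIdx L t0) : Option (DIdx L t2) :=
  if h : r.1.2 = c.1.2 ∧ r.1.1 ⊆ c.1.1 then
    some ⟨(c.1.1 \ r.1.1, c.1.2), by
      refine ⟨?_, Finset.sdiff_subset.trans c.2.2⟩
      rw [Finset.card_sdiff_of_subset h.2, c.2.1, r.2.1, h2]⟩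
  else none

lemma pdaEntry_eq_none {V : Type} [DecidableEq V] {L : List (Finset V)} {t1 t0 t2 : ℕ}
    {h2 : t0 - t1 = t2} {r : DIdx L t1} {c : DIdx L t0} :
    pdaEntry L t1 t0 t2 h2 r c = none ↔ ¬(r.1.2 = c.1.2 ∧ r.1.1 ⊆ c.1.1) := by
  unfold pdaEntry
  split <;> simp_all

lemma pdaEntry_eq_some {V : Type} [DecidableEq V] {L : List (Finset V)} {t1 t0 t2 : ℕ}
    {h2 : t0 - t1 = t2} {r : DIdx L t1} {c : DIdx L t0} {y : DIdx L t2} :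
    pdaEntry L t1 t0 t2 h2 r c = some y ↔
      (r.1.2 = c.1.2 ∧ r.1.1 ⊆ c.1.1) ∧ y.1.1 = c.1.1 \ r.1.1 ∧ y.1.2 = c.1.2 := by
  unfold pdaEntry
  split
  case isTrue h =>
    rw [Option.some_inj]
    constructor
    · rintro rfl
      exact ⟨h, rfl, rfl⟩
    · rintro ⟨-, e1, e2⟩
      exact Subtype.ext (Prod.ext e1.symm e2.symm)
  case isFalse h => simp [h]

/-- `t`-design construction, parameter set 3: a `t`-`(v,k,λ)` design with `λ ≥ 1`
and positive `t0, t1, t2` with `t0 = t1 + t2 ≤ t` yields a PDA with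
`K = C(v,t0)·λ_{t0}`, `F = C(v,t1)·λ_{t1}`, `Q = C(v,t1)·λ_{t1} - C(t0,t1)`,
`S = C(v,t2)·λ_{t2}`. -/
theorem exists_pda_of_design_three {V : Type} [Fintype V] [DecidableEq V]
    (B : Multiset (Finset V)) (t v k lam t0 t1 t2 : ℕ)
    (ht : 0 < t) (htk : t ≤ k) (hkv : k < v) (hlam : 1 ≤ lam)
    (hdes : IsTDesign B t v k lam)
    (ht0 : 0 < t0) (ht1 : 0 < t1) (ht2 : 0 < t2)
    (hsum : t0 = t1 + t2) (ht0t : t0 ≤ t) :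
    ExistsPDA (Nat.choose v t0 * designLambda lam v k t t0)
      (Nat.choose v t1 * designLambda lam v k t t1)
      (Nat.choose v t1 * designLambda lam v k t t1 - Nat.choose t0 t1)
      (Nat.choose v t2 * designLambda lam v k t t2) := by
  classical
  have hmem : ∀ j : Fin B.toList.length, B.toList.get j ∈ B := by
    intro j
    exact Multiset.mem_toList.mp (List.get_mem B.toList j)
  have hk : ∀ j : Fin B.toList.length, (B.toList.get j).card = k := fun j =>
    hdes.2.1 _ (hmem j)
  have ht1t : t1 ≤ t := by omega
  have ht2t : t2 ≤ t := by omega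
  have h2 : t0 - t1 = t2 := by omega
  have hK := card_dIdx htk hdes ht0t
  have hF := card_dIdx htk hdes ht1t
  have hS := card_dIdx htk hdes ht2t
  refine existsPDA_of hF hK hS (pdaEntry B.toList t1 t0 t2 h2) ?_ ?_ ?_
  · -- C1
    intro c
    have hpos : (univ.filter fun r : DIdx B.toList t1 =>
        ¬ pdaEntry B.toList t1 t0 t2 h2 r c = none).card = t0.choose t1 := by
      have hpc : (Finset.powersetCard t1 c.1.1).card = t0.choose t1 := by
        rw [Finset.card_powersetCard, c.2.1]
      rw [← hpc]
      refine Finset.card_bij' (fun r _ => r.1.1)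
        (fun T1 hT1 => ⟨(T1, c.1.2),
          (mem_powersetCard.mp hT1).2, (mem_powersetCard.mp hT1).1.trans c.2.2⟩)
        ?_ ?_ ?_ ?_
      · intro r hr
        simp only [mem_filter, mem_univ, true_and, pdaEntry_eq_none, not_not] at hr
        exact mem_powersetCard.mpr ⟨hr.2, r.2.1⟩
      · intro T1 hT1
        exact mem_filter.mpr ⟨mem_univ _,
          fun hn => pdaEntry_eq_none.mp hn ⟨rfl, (mem_powersetCard.mp hT1).1⟩⟩
      · intro r hr
        simp only [mem_filter, mem_univ, true_and, pdaEntry_eq_none, not_not] at hr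
        exact Subtype.ext (Prod.ext rfl hr.1.symm)
      · intro T1 hT1
        rfl
    have hadd := Finset.card_filter_add_card_filter_not
      (s := (univ : Finset (DIdx B.toList t1)))
      (p := fun r => pdaEntry B.toList t1 t0 t2 h2 r c = none)
    have hcard : (univ : Finset (DIdx B.toList t1)).card
        = v.choose t1 * designLambda lam v k t t1 := by
      rw [Finset.card_univ]; exact hF
    omega
  · -- C2
    rintro ⟨⟨T2, i⟩, hc2, hs2⟩
    have hki : (B.toList.get i).card = k := hk i
    obtain ⟨T1, hT1sub, hT1card⟩ :=
      Finset.exists_subset_card_eq (s := B.toList.get i \ T2) (n := t1)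
        (by rw [card_sdiff_of_subset hs2, hki, hc2]; omega)
    have hdisj : Disjoint T1 T2 := (Finset.subset_sdiff.mp hT1sub).2
    have hT1blk : T1 ⊆ B.toList.get i := hT1sub.trans sdiff_subset
    refine ⟨⟨(T1, i), hT1card, hT1blk⟩,
      ⟨(T1 ∪ T2, i), by rw [card_union_of_disjoint hdisj, hT1card, hc2]; omega,
        union_subset hT1blk hs2⟩, ?_⟩
    exact pdaEntry_eq_some.mpr
      ⟨⟨rfl, subset_union_left⟩, (union_sdiff_cancel_left hdisj).symm, rfl⟩
  · -- C3
    intro r₁ r₂ c₁ c₂ y hne hp1 hp2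
    obtain ⟨⟨hj1, hs1⟩, hA1, hi1⟩ := pdaEntry_eq_some.mp hp1
    obtain ⟨⟨hj2, hs2⟩, hA2, hi2⟩ := pdaEntry_eq_some.mp hp2
    have hU1 : r₁.1.1 ∪ y.1.1 = c₁.1.1 := by rw [hA1, union_sdiff_of_subset hs1]
    have hU2 : r₂.1.1 ∪ y.1.1 = c₂.1.1 := by rw [hA2, union_sdiff_of_subset hs2]
    have hd1 : Disjoint r₁.1.1 y.1.1 := by rw [hA1]; exact disjoint_sdiff
    have hd2 : Disjoint r₂.1.1 y.1.1 := by rw [hA2]; exact disjoint_sdiff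
    have key : r₁.1.1 = r₂.1.1 → False := by
      intro hTT
      apply hne
      have hii : c₁.1.2 = c₂.1.2 := by rw [← hi1, ← hi2]
      have hjj : r₁.1.2 = r₂.1.2 := by rw [hj1, hj2, hii]
      have hT00 : c₁.1.1 = c₂.1.1 := by rw [← hU1, ← hU2, hTT]
      exact Prod.ext (Subtype.ext (Prod.ext hTT hjj)) (Subtype.ext (Prod.ext hT00 hii))
    have subkey1 : r₁.1.1 ⊆ c₂.1.1 → False := by
      intro hsub
      have hsub' : r₁.1.1 ⊆ r₂.1.1 := by
        intro a ha
        have : a ∈ r₂.1.1 ∪ y.1.1 := by rw [hU2]; exact hsub ha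
        rcases mem_union.mp this with h | h
        · exact h
        · exact absurd h (Finset.disjoint_left.mp hd1 ha)
      exact key (eq_of_subset_of_card_le hsub' (by rw [r₁.2.1, r₂.2.1]))
    have subkey2 : r₂.1.1 ⊆ c₁.1.1 → False := by
      intro hsub
      have hsub' : r₂.1.1 ⊆ r₁.1.1 := by
        intro a ha
        have : a ∈ r₁.1.1 ∪ y.1.1 := by rw [hU1]; exact hsub ha
        rcases mem_union.mp this with h | h
        · exact h
        · exact absurd h (Finset.disjoint_left.mp hd2 ha)
      exact key (eq_of_subset_of_card_le hsub' (by rw [r₁.2.1, r₂.2.1])).symm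
    refine ⟨?_, ?_, ?_, ?_⟩
    · intro h
      exact key (congrArg (fun x => x.1.1) h)
    · intro h
      have hT00 : c₁.1.1 = c₂.1.1 := congrArg (fun x => x.1.1) h
      have ht1e : r₁.1.1 = c₁.1.1 \ y.1.1 := by rw [hA1, Finset.sdiff_sdiff_eq_self hs1]
      have ht1e' : r₂.1.1 = c₂.1.1 \ y.1.1 := by rw [hA2, Finset.sdiff_sdiff_eq_self hs2]
      exact key (by rw [ht1e, ht1e', hT00])
    · rw [pdaEntry_eq_none]
      rintro ⟨-, hsub⟩
      exact subkey1 hsub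
    · rw [pdaEntry_eq_none]
      rintro ⟨-, hsub⟩
      exact subkey2 hsub
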